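/- Let E be a finite set with |E| = m, w ∈ ℤ⁺, and (E, f) a w-demi-matroid with k = f(E). Define h(B) = f(E - B) + w|B| - k. Let P = (E, ⪯) be a poset and P̄ its dual poset. With generalized weights d_a(f, P) = min{|B| : B an ideal of P, a ≤ f(B)} and profiles K_b(f, P) = max{f(B) : B an ideal of P, |B| = b}, it holds that: (1) K_l(h, P̄) = K_{m-l}(f, P) + wl - k for all l ∈ [0,m]; (2) for every γ ∈ ℤ, {d_u(f, P) : u ∈ [1,k], u ≡ γ + k (mod w)} and {m + 1 - d_v(h, P̄) : v ∈ [1, wm-k], v ≡ γ (mod w)} partition [1,m]. -/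

import Mathlib

/-- A `w`-demi-matroid on a finite set `E`. -/
def IsWDemiMatroid {E : Type*} [Fintype E] [DecidableEq E] (w : ℤ)
    (f : Finset E → ℤ) : Prop :=
  f ∅ = 0 ∧ ∀ A B : Finset E, A ⊆ B →
    0 ≤ f B - f A ∧ f B - f A ≤ w * ((B.card : ℤ) - A.card)

/-- The set of ideals (downward closed subsets) of the poset `E`. -/
def idealsOf (E : Type*) [PartialOrder E] : Set (Finset E) :=
  {I | ∀ v ∈ I, ∀ u, u ≤ v → u ∈ I}

/-- The set of ideals of the dual poset (upward closed subsets) of `E`. -/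
def dualIdealsOf (E : Type*) [PartialOrder E] : Set (Finset E) :=
  {I | ∀ v ∈ I, ∀ u, v ≤ u → u ∈ I}

/-- `d_a(f, P) = min {|B| : B an ideal of P, a ≤ f B}`. -/
noncomputable def dgen {E : Type*} (f : Finset E → ℤ) (𝒞 : Set (Finset E))
    (a : ℤ) : ℤ :=
  sInf {x | ∃ B ∈ 𝒞, a ≤ f B ∧ (B.card : ℤ) = x}

/-- `K_b(f, P) = max {f B : B an ideal of P, |B| = b}`. -/
noncomputable def Kgen {E : Type*} (f : Finset E → ℤ) (𝒞 : Set (Finset E))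
    (b : ℕ) : ℤ :=
  sSup {x | ∃ B ∈ 𝒞, B.card = b ∧ f B = x}

/-!
Both parts rest on the profile `K_b = K_b(f, P)`. Complementation `B ↦ Bᶜ` exchanges ideals of `P`
of size `m - l` with ideals of `P̄` of size `l`, which gives (1). The ideals of either order can be
grown and shrunk one element at a time, so `K` is nondecreasing with increments at most `w`, and
`d_u(f, P) = b + 1` exactly when `K_b < u ≤ K_{b+1}`. By (1) and a reindexing,
`m + 1 - d_v(h, P̄) = b + 1` exactly when `u = v + k - w (m - 1 - b)` satisfies
`K_{b+1} < u ≤ K_b + w`. The window `(K_b, K_b + w]` holds exactly one integer of each residue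
class mod `w`, and `K_{b+1}` cuts it in two, so each `b + 1 ∈ [1, m]` is hit by exactly one of
the two sets.
-/

open Finset

lemma exists_lt_le_succ (K : ℕ → ℤ) {u : ℤ} {n : ℕ} (h0 : K 0 < u) (hn : u ≤ K n) :
    ∃ b < n, K b < u ∧ u ≤ K (b + 1) := by
  induction n with
  | zero => exact absurd hn (not_le.2 h0)
  | succ n ih =>
    by_cases hun : u ≤ K n
    · obtain ⟨b, hb, hbu⟩ := ih hun
      exact ⟨b, hb.trans n.lt_succ_self, hbu⟩
    · exact ⟨n, n.lt_succ_self, not_le.1 hun, hn⟩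

lemma modEq_iff_eq_toIocMod {w : ℤ} (hw : 0 < w) {a u : ℤ} (hu : u ∈ Set.Ioc a (a + w)) (r : ℤ) :
    u ≡ r [ZMOD w] ↔ u = toIocMod hw a r := by
  rw [eq_comm, toIocMod_eq_iff, Int.modEq_iff_dvd]
  refine ⟨fun ⟨z, hz⟩ => ⟨hu, z, by rw [smul_eq_mul]; linarith⟩, fun ⟨_, z, hz⟩ => ⟨z, ?_⟩⟩
  rw [hz, smul_eq_mul]; ring

lemma exists_modEq_Ioc_iff_not {w : ℤ} (hw : 0 < w) {a c : ℤ} (hac : a ≤ c) (hca : c ≤ a + w)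
    (r : ℤ) : (∃ u, u ≡ r [ZMOD w] ∧ a < u ∧ u ≤ c) ↔
      ¬ ∃ u, u ≡ r [ZMOD w] ∧ c < u ∧ u ≤ a + w := by
  have ht := toIocMod_mem_Ioc hw a r
  have key : ∀ {u}, a < u → u ≤ a + w → (u ≡ r [ZMOD w] ↔ u = toIocMod hw a r) :=
    fun hau hua => modEq_iff_eq_toIocMod hw ⟨hau, hua⟩ r
  constructor
  · rintro ⟨u, hu, hau, huc⟩ ⟨v, hv, hcv, hva⟩
    have := (key hau (huc.trans hca)).1 hu
    have := (key (hac.trans_lt hcv) hva).1 hv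
    omega
  · intro hne
    refine ⟨_, (key ht.1 ht.2).2 rfl, ht.1, ?_⟩
    by_contra! htc
    exact hne ⟨_, (key ht.1 ht.2).2 rfl, htc, ht.2⟩

lemma modEq_add_iff_sub_add_mul_modEq {w u γ k : ℤ} (b : ℤ) :
    u ≡ γ + k [ZMOD w] ↔ u - k + w * b ≡ γ [ZMOD w] := by
  rw [Int.add_modulus_mul_modEq_iff, Int.modEq_iff_dvd, Int.modEq_iff_dvd,
    show γ - (u - k) = γ + k - u by ring]

lemma inter_eq_empty_and_union_eq_Icc_of_iff_not {n : ℕ} {A B : ℕ → Prop} {S T : Set ℤ}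
    (hS : ∀ x, x ∈ S ↔ ∃ b < n, x = b + 1 ∧ A b) (hT : ∀ x, x ∈ T ↔ ∃ b < n, x = b + 1 ∧ B b)
    (hAB : ∀ b < n, A b ↔ ¬ B b) : S ∩ T = ∅ ∧ S ∪ T = Set.Icc 1 (n : ℤ) := by
  constructor
  · ext x
    simp only [Set.mem_inter_iff, hS, hT, Set.mem_empty_iff_false, iff_false]
    rintro ⟨⟨b, hb, rfl, hA⟩, ⟨b', -, hbb', hB⟩⟩
    obtain rfl : b = b' := by omega
    exact (hAB b hb).1 hA hB
  · ext x
    simp only [Set.mem_union, hS, hT, Set.mem_Icc]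
    constructor
    · rintro (⟨b, hb, rfl, -⟩ | ⟨b, hb, rfl, -⟩) <;> omega
    · rintro ⟨hx1, hxn⟩
      obtain ⟨b, rfl⟩ : ∃ b : ℕ, x = b + 1 := ⟨(x - 1).toNat, by omega⟩
      have hb : b < n := by omega
      exact or_iff_not_imp_right.2 fun hB =>
        ⟨b, hb, rfl, (hAB b hb).2 fun hB' => hB ⟨b, hb, rfl, hB'⟩⟩

section Profile

variable {E : Type*} [Fintype E] {𝒞 : Set (Finset E)} {g : Finset E → ℤ}

lemma finite_setOf_Kgen (g : Finset E → ℤ) (𝒞 : Set (Finset E)) (b : ℕ) :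
    {x | ∃ B ∈ 𝒞, #B = b ∧ g B = x}.Finite :=
  (Set.finite_range g).subset (by rintro x ⟨B, -, -, rfl⟩; exact ⟨B, rfl⟩)

lemma le_Kgen {B : Finset E} (hB : B ∈ 𝒞) : g B ≤ Kgen g 𝒞 #B :=
  le_csSup (finite_setOf_Kgen g 𝒞 _).bddAbove ⟨B, hB, rfl, rfl⟩

variable [DecidableEq E]

lemma IsWDemiMatroid.monotone {w : ℤ} {f : Finset E → ℤ} (hf : IsWDemiMatroid w f) :
    Monotone f :=
  fun A B hAB => sub_nonneg.1 (hf.2 A B hAB).1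

lemma IsWDemiMatroid.dual {w : ℤ} {f : Finset E → ℤ} (hf : IsWDemiMatroid w f) :
    IsWDemiMatroid w (fun B => f Bᶜ + w * #B - f univ) := by
  refine ⟨by simp, fun A B hAB => ?_⟩
  have hBA := hf.2 Bᶜ Aᶜ (compl_subset_compl.2 hAB)
  have hcard : ((#Aᶜ : ℕ) : ℤ) - #Bᶜ = #B - #A := by
    rw [card_compl, card_compl, Nat.cast_sub (card_le_univ A), Nat.cast_sub (card_le_univ B)]
    ring
  rw [hcard] at hBA
  constructor <;> linarith [hBA.1, hBA.2]

structure IsGradedFamily (𝒞 : Set (Finset E)) : Prop where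
  empty_mem : ∅ ∈ 𝒞
  exists_insert_mem : ∀ I ∈ 𝒞, I ≠ univ → ∃ x ∉ I, insert x I ∈ 𝒞
  exists_erase_mem : ∀ I ∈ 𝒞, I.Nonempty → ∃ x ∈ I, I.erase x ∈ 𝒞

namespace IsGradedFamily

variable {b : ℕ}

lemma exists_superset_card_eq (h𝒞 : IsGradedFamily 𝒞) {A : Finset E} (hA : A ∈ 𝒞)
    (hAb : #A ≤ b) (hb : b ≤ Fintype.card E) : ∃ B ∈ 𝒞, A ⊆ B ∧ #B = b := by
  induction b, hAb using Nat.le_induction with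
  | base => exact ⟨A, hA, subset_rfl, rfl⟩
  | succ b _ ih =>
    obtain ⟨B, hB, hAB, rfl⟩ := ih (by omega)
    have hBne : B ≠ univ := fun hB => by rw [hB, card_univ] at hb; omega
    obtain ⟨x, hx, hxB⟩ := h𝒞.exists_insert_mem B hB hBne
    exact ⟨insert x B, hxB, hAB.trans (subset_insert x B), card_insert_of_notMem hx⟩

lemma exists_Kgen_eq (h𝒞 : IsGradedFamily 𝒞) (hb : b ≤ Fintype.card E) :
    ∃ B ∈ 𝒞, #B = b ∧ g B = Kgen g 𝒞 b := by
  obtain ⟨B, hB, -, hcard⟩ := h𝒞.exists_superset_card_eq h𝒞.empty_mem (Nat.zero_le b) hb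
  have hne : {x | ∃ B ∈ 𝒞, #B = b ∧ g B = x}.Nonempty := ⟨g B, B, hB, hcard, rfl⟩
  exact hne.csSup_mem (finite_setOf_Kgen g 𝒞 b)

lemma Kgen_zero (h𝒞 : IsGradedFamily 𝒞) (hg : g ∅ = 0) : Kgen g 𝒞 0 = 0 := by
  obtain ⟨B, -, hB, hgB⟩ := h𝒞.exists_Kgen_eq (g := g) (Nat.zero_le _)
  rw [← hgB, card_eq_zero.1 hB, hg]

lemma Kgen_card_univ (h𝒞 : IsGradedFamily 𝒞) :
    Kgen g 𝒞 (Fintype.card E) = g univ := by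
  obtain ⟨B, -, hB, hgB⟩ := h𝒞.exists_Kgen_eq (g := g) le_rfl
  rw [← hgB, (card_eq_iff_eq_univ B).1 hB]

lemma Kgen_mono (h𝒞 : IsGradedFamily 𝒞) (hg : Monotone g) {a : ℕ} (hab : a ≤ b)
    (hb : b ≤ Fintype.card E) : Kgen g 𝒞 a ≤ Kgen g 𝒞 b := by
  obtain ⟨A, hA, rfl, hgA⟩ := h𝒞.exists_Kgen_eq (g := g) (hab.trans hb)
  obtain ⟨B, hB, hAB, rfl⟩ := h𝒞.exists_superset_card_eq hA hab hb
  exact hgA ▸ (hg hAB).trans (le_Kgen hB)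

lemma Kgen_succ_le {w : ℤ} (h𝒞 : IsGradedFamily 𝒞) (hg : IsWDemiMatroid w g)
    (hb : b < Fintype.card E) : Kgen g 𝒞 (b + 1) ≤ Kgen g 𝒞 b + w := by
  obtain ⟨B, hB, hcard, hgB⟩ := h𝒞.exists_Kgen_eq (g := g) (b := b + 1) hb
  obtain ⟨x, hx, hxB⟩ := h𝒞.exists_erase_mem B hB (card_pos.1 (by omega))
  have hxcard : #(B.erase x) = b := by rw [card_erase_of_mem hx, hcard, Nat.add_sub_cancel]
  have hstep := (hg.2 _ B (erase_subset x B)).2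
  rw [hxcard, hcard] at hstep
  push_cast at hstep
  linarith [hxcard ▸ le_Kgen (g := g) hxB]

lemma dgen_eq_succ (h𝒞 : IsGradedFamily 𝒞) (hg : Monotone g)
    (hb : b < Fintype.card E) {u : ℤ} (hlt : Kgen g 𝒞 b < u) (hle : u ≤ Kgen g 𝒞 (b + 1)) :
    dgen g 𝒞 u = b + 1 := by
  refine IsLeast.csInf_eq ⟨?_, ?_⟩
  · obtain ⟨B, hB, hcard, hgB⟩ := h𝒞.exists_Kgen_eq (g := g) hb
    exact ⟨B, hB, hgB ▸ hle, by rw [hcard]; push_cast; rfl⟩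
  · rintro x ⟨B, hB, huB, rfl⟩
    by_contra! hBb
    have := h𝒞.Kgen_mono hg (Nat.lt_succ_iff.1 (by exact_mod_cast hBb)) hb.le
    linarith [le_Kgen (g := g) hB]

lemma exists_dgen_eq_iff (h𝒞 : IsGradedFamily 𝒞) (hg : Monotone g)
    (hg0 : g ∅ = 0) (P : ℤ → Prop) (x : ℤ) :
    (∃ u, 1 ≤ u ∧ u ≤ g univ ∧ P u ∧ dgen g 𝒞 u = x) ↔
      ∃ b < Fintype.card E, x = b + 1 ∧
        ∃ u, P u ∧ Kgen g 𝒞 b < u ∧ u ≤ Kgen g 𝒞 (b + 1) := by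
  constructor
  · rintro ⟨u, hu1, hug, hPu, rfl⟩
    obtain ⟨b, hb, hbu, hub⟩ := exists_lt_le_succ (Kgen g 𝒞) (u := u)
      (by rw [h𝒞.Kgen_zero hg0]; omega) (by rwa [h𝒞.Kgen_card_univ])
    exact ⟨b, hb, h𝒞.dgen_eq_succ hg hb hbu hub, u, hPu, hbu, hub⟩
  · rintro ⟨b, hb, rfl, u, hPu, hbu, hub⟩
    have h0 := h𝒞.Kgen_mono (g := g) hg (Nat.zero_le b) hb.le
    have hn := h𝒞.Kgen_mono (g := g) (a := b + 1) hg hb le_rfl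
    rw [h𝒞.Kgen_zero hg0] at h0
    rw [h𝒞.Kgen_card_univ] at hn
    exact ⟨u, by omega, by omega, hPu, h𝒞.dgen_eq_succ hg hb hbu hub⟩

lemma Kgen_compl (h𝒞 : IsGradedFamily 𝒞) {𝒟 : Set (Finset E)}
    (h𝒟 : ∀ B, Bᶜ ∈ 𝒟 ↔ B ∈ 𝒞) (c d : ℤ) {l : ℕ} (hl : l ≤ Fintype.card E) :
    Kgen (fun B => g Bᶜ + c * #B - d) 𝒟 l = Kgen g 𝒞 (Fintype.card E - l) + c * l - d := by
  refine IsGreatest.csSup_eq ⟨?_, ?_⟩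
  · obtain ⟨C, hC, hcard, hgC⟩ := h𝒞.exists_Kgen_eq (g := g) (Nat.sub_le _ l)
    have hCc : #Cᶜ = l := by rw [card_compl, hcard]; omega
    exact ⟨Cᶜ, (h𝒟 C).2 hC, hCc, by simp only [compl_compl, hgC, hCc]⟩
  · rintro x ⟨B, hB, rfl, rfl⟩
    have := le_Kgen (g := g) ((h𝒟 Bᶜ).1 (by rwa [compl_compl]))
    rw [card_compl] at this
    dsimp only
    linarith

lemma exists_dgen_compl_eq_iff {w : ℤ} (h𝒞 : IsGradedFamily 𝒞)
    {𝒟 : Set (Finset E)} (h𝒟 : IsGradedFamily 𝒟) (h𝒟𝒞 : ∀ B, Bᶜ ∈ 𝒟 ↔ B ∈ 𝒞)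
    (hg : IsWDemiMatroid w g) (γ x : ℤ) :
    (∃ v, 1 ≤ v ∧ v ≤ w * Fintype.card E - g univ ∧ v ≡ γ [ZMOD w] ∧
        (Fintype.card E : ℤ) + 1 - dgen (fun B => g Bᶜ + w * #B - g univ) 𝒟 v = x) ↔
      ∃ b < Fintype.card E, x = b + 1 ∧
        ∃ u, u ≡ γ + g univ [ZMOD w] ∧ Kgen g 𝒞 (b + 1) < u ∧ u ≤ Kgen g 𝒞 b + w := by
  set n := Fintype.card E
  have hg' := hg.dual
  have hK' := fun l (hl : l ≤ n) => h𝒞.Kgen_compl h𝒟𝒞 w (g univ) (g := g) hl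
  calc _ ↔ ∃ v, 1 ≤ v ∧ v ≤ (fun B => g Bᶜ + w * #B - g univ) univ ∧ v ≡ γ [ZMOD w] ∧
        dgen (fun B => g Bᶜ + w * #B - g univ) 𝒟 v = n + 1 - x := by
        simp only [compl_univ, hg.1, card_univ, zero_add]
        exact exists_congr fun v => and_congr_right' <| and_congr_right' <| and_congr_right'
          ⟨fun h => by omega, fun h => by omega⟩
    _ ↔ _ := h𝒟.exists_dgen_eq_iff hg'.monotone hg'.1 _ _
    _ ↔ _ := by
      constructor
      · rintro ⟨b, hb, hx, v, hv, hlt, hle⟩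
        rw [hK' b hb.le, show n - b = n - 1 - b + 1 by omega] at hlt
        rw [hK' (b + 1) hb, show n - (b + 1) = n - 1 - b by omega] at hle
        refine ⟨n - 1 - b, by omega, by omega, v + g univ - w * b, ?_, by linarith, ?_⟩
        · rwa [modEq_add_iff_sub_add_mul_modEq b,
            show v + g univ - w * b - g univ + w * b = v by ring]
        · push_cast at hle; linarith
      · rintro ⟨b, hb, rfl, u, hu, hlt, hle⟩
        refine ⟨n - 1 - b, by omega, by omega, u - g univ + w * ↑(n - 1 - b),
          (modEq_add_iff_sub_add_mul_modEq _).1 hu, ?_, ?_⟩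
        · rw [hK' _ (by omega), show n - (n - 1 - b) = b + 1 by omega]
          linarith
        · rw [hK' _ (by omega), show n - (n - 1 - b + 1) = b by omega]
          push_cast; linarith

end IsGradedFamily

end Profile

section PartialOrder

variable {E : Type*} [Fintype E] [DecidableEq E] [PartialOrder E]

lemma isGradedFamily_idealsOf : IsGradedFamily (idealsOf E) where
  empty_mem := fun v hv => absurd hv (notMem_empty v)
  exists_insert_mem I hI hIne := by
    obtain ⟨x, hx⟩ := exists_minimal (s := Iᶜ) (by simpa [nonempty_iff_ne_empty] using hIne)
    refine ⟨x, mem_compl.1 hx.1, fun v hv u huv => ?_⟩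
    rcases mem_insert.1 hv with rfl | hvI
    · by_cases hu : u ∈ I
      · exact mem_insert_of_mem hu
      · rw [le_antisymm huv (hx.2 (mem_compl.2 hu) huv)]
        exact mem_insert_self _ _
    · exact mem_insert_of_mem (hI v hvI u huv)
  exists_erase_mem I hI hIne := by
    obtain ⟨x, hxI, hx⟩ := exists_maximal hIne
    refine ⟨x, hxI, fun v hv u huv => mem_erase.2 ⟨?_, hI v (mem_of_mem_erase hv) u huv⟩⟩
    rintro rfl
    exact ne_of_mem_erase hv (le_antisymm (hx (mem_of_mem_erase hv) huv) huv)

lemma isGradedFamily_dualIdealsOf : IsGradedFamily (dualIdealsOf E) :=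
  isGradedFamily_idealsOf (E := Eᵒᵈ)

lemma compl_mem_dualIdealsOf_iff {B : Finset E} : Bᶜ ∈ dualIdealsOf E ↔ B ∈ idealsOf E := by
  refine ⟨fun hB v hv u huv => ?_, fun hB v hv u huv => ?_⟩
  · by_contra hu
    exact notMem_compl.2 hv (hB u (mem_compl.2 hu) v huv)
  · exact mem_compl.2 fun hu => mem_compl.1 hv (hB u hu v huv)

end PartialOrder

/-- Theorem 4.2: Wei-type duality for `w`-demi-matroids with respect to a poset
`P` on `E` and its dual poset. -/
theorem stmt_16 {E : Type*} [Fintype E] [DecidableEq E] [PartialOrder E]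
    (m : ℕ) (hm : Fintype.card E = m) (w : ℤ) (hw : 1 ≤ w)
    (f : Finset E → ℤ) (hf : IsWDemiMatroid w f)
    (k : ℤ) (hk : f Finset.univ = k)
    (h : Finset E → ℤ)
    (hh : ∀ B : Finset E, h B = f Bᶜ + w * B.card - k) :
    (∀ l : ℕ, l ≤ m →
      Kgen h (dualIdealsOf E) l = Kgen f (idealsOf E) (m - l) + w * l - k) ∧
    (∀ γ : ℤ,
      {x | ∃ u, 1 ≤ u ∧ u ≤ k ∧ u ≡ γ + k [ZMOD w] ∧
          dgen f (idealsOf E) u = x} ∩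
        {x | ∃ v, 1 ≤ v ∧ v ≤ w * m - k ∧ v ≡ γ [ZMOD w] ∧
          (m : ℤ) + 1 - dgen h (dualIdealsOf E) v = x} = ∅ ∧
      {x | ∃ u, 1 ≤ u ∧ u ≤ k ∧ u ≡ γ + k [ZMOD w] ∧
          dgen f (idealsOf E) u = x} ∪
        {x | ∃ v, 1 ≤ v ∧ v ≤ w * m - k ∧ v ≡ γ [ZMOD w] ∧
          (m : ℤ) + 1 - dgen h (dualIdealsOf E) v = x} = Set.Icc 1 (m : ℤ)) := by
  subst hm hk
  obtain rfl : h = fun B => f Bᶜ + w * #B - f univ := funext hh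
  have hI := isGradedFamily_idealsOf (E := E)
  have hcompl : ∀ B, Bᶜ ∈ dualIdealsOf E ↔ B ∈ idealsOf E := fun _ => compl_mem_dualIdealsOf_iff
  refine ⟨fun l hl => hI.Kgen_compl hcompl w (f univ) hl, fun γ => ?_⟩
  have hS₁ := hI.exists_dgen_eq_iff hf.monotone hf.1 (· ≡ γ + f univ [ZMOD w])
  have hS₂ := hI.exists_dgen_compl_eq_iff isGradedFamily_dualIdealsOf hcompl hf γ
  exact inter_eq_empty_and_union_eq_Icc_of_iff_not hS₁ hS₂ fun b hb =>
    exists_modEq_Ioc_iff_not (by omega) (hI.Kgen_mono hf.monotone b.le_succ hb)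
      (hI.Kgen_succ_le hf hb) (γ + f univ)
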